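/- Let ζ : [0,∞) → ℂ be continuous and f : [0,∞) → ℂ be continuous. Then the Volterra integral equation q(t) + ∫₀^t 𝓘(t−τ) ζ(τ) q(τ) dτ = f(t), for all t ≥ 0, admits a unique continuous solution q : [0,∞) → ℂ. -/

import Mathlib

open MeasureTheory

/-- The Volterra function of order `-1`: `𝓘(t) = ∫₀^∞ t^(s-1)/Γ(s) ds`. -/
noncomputable def volterraI (t : ℝ) : ℝ :=
  ∫ s in Set.Ioi (0 : ℝ), t ^ (s - 1) / Real.Gamma s

/-!
The kernel `𝓘` enters only through its integrability on every `(0, T]`: by Tonelli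
`∫₀ᵀ 𝓘 = ∫₀^∞ T^s / Γ(s + 1) ds`, which is finite since `Γ(s + 1) ≥ a^s e^{-a}` for every `a ≥ 0`.

For a kernel `K` integrable on every `(0, T]`, the operator `V g (t) = ∫₀ᵗ K(t - τ) ζ(τ) g(τ) dτ`
halves the weighted norm `sup_{[0,T]} ‖g(τ)‖ e^{-cτ}` as soon as
`sup_{[0,T]} ‖ζ‖ · ∫₀ᵀ |K(u)| e^{-cu} du ≤ 1/2`, which holds for large `c` by dominated
convergence. So the Neumann series `∑ₙ (-V)ⁿ f` converges uniformly on compacts to a continuous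
solution, and the difference of two solutions, a fixed point of `-V`, is zero.
-/

open Set Real Filter Topology

lemma continuousOn_Ici_of_forall_Icc {E : Type*} [TopologicalSpace E] {f : ℝ → E} {a : ℝ}
    (h : ∀ b, a < b → ContinuousOn f (Icc a b)) : ContinuousOn f (Ici a) := fun t (ht : a ≤ t) =>
  (h (t + 1) (by linarith) t ⟨ht, by linarith⟩).mono_of_mem_nhdsWithin <|
    mem_nhdsWithin.2 ⟨Iio (t + 1), isOpen_Iio, by simp, fun _ hx => ⟨hx.2, hx.1.le⟩⟩

section Kernel

variable {K : ℝ → ℝ} {T t : ℝ}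

lemma MeasureTheory.IntegrableOn.intervalIntegrable_comp_sub_left (hK : IntegrableOn K (Ioc 0 t))
    (ht : 0 ≤ t) : IntervalIntegrable (fun τ => K (t - τ)) volume 0 t := by
  simpa using (((intervalIntegrable_iff_integrableOn_Ioc_of_le ht).2 hK).comp_sub_left t).symm

lemma integral_comp_sub_mul_exp (K : ℝ → ℝ) (c t : ℝ) :
    ∫ τ in (0 : ℝ)..t, K (t - τ) * exp (c * τ) =
      exp (c * t) * ∫ u in (0 : ℝ)..t, K u * exp (-(c * u)) := by
  have h := intervalIntegral.integral_comp_sub_left (a := 0) (b := t)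
    (fun u => K u * exp (c * (t - u))) t
  simp only [sub_sub_cancel, sub_self, sub_zero] at h
  rw [h, ← intervalIntegral.integral_const_mul]
  congr 1 with u
  rw [mul_sub, sub_eq_add_neg, exp_add]
  ring

lemma exists_integral_mul_exp_neg_le (hK : IntegrableOn K (Ioc 0 T)) (M : ℝ) :
    ∃ c, 0 ≤ c ∧ M * ∫ u in Ioc 0 T, |K u| * exp (-(c * u)) ≤ 1 / 2 := by
  have hlim : Tendsto (fun c : ℝ => ∫ u in Ioc 0 T, |K u| * exp (-(c * u))) atTop
      (𝓝 (∫ _ in Ioc 0 T, (0 : ℝ))) := by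
    refine tendsto_integral_filter_of_dominated_convergence (fun u => |K u|) ?_ ?_ hK.abs ?_
    · exact Eventually.of_forall fun c => hK.abs.aestronglyMeasurable.mul
        (by fun_prop : Continuous fun u => exp (-(c * u))).aestronglyMeasurable
    · filter_upwards [eventually_ge_atTop 0] with c hc
      refine ae_restrict_of_forall_mem measurableSet_Ioc fun u hu => ?_
      rw [norm_mul, norm_abs_eq_norm, norm_of_nonneg (exp_pos _).le]
      exact mul_le_of_le_one_right (abs_nonneg _)
        (exp_le_one_iff.2 (neg_nonpos.2 (mul_nonneg hc hu.1.le)))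
    · refine ae_restrict_of_forall_mem measurableSet_Ioc fun u hu => ?_
      simpa using (tendsto_exp_neg_atTop_nhds_zero.comp
        (tendsto_id.atTop_mul_const hu.1)).const_mul |K u|
  rw [integral_zero] at hlim
  obtain ⟨c, hc, hc0⟩ := ((hlim.const_mul M).eventually
    (ge_mem_nhds (by norm_num : M * 0 < 1 / 2))).and (eventually_ge_atTop 0) |>.exists
  exact ⟨c, hc0, hc⟩

/- With `H` the extension of `h` by constants,
`∫₀ᵗ K(t - τ) h(τ) dτ = ∫₀ᵀ K(u) H(t - u) du - h(0) ∫ₜᵀ K`, and both terms are continuous in `t`: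
the first by dominated convergence, the second as a primitive. -/
lemma continuousOn_integral_comp_sub_mul_Icc {h : ℝ → ℂ} (hK : IntegrableOn K (Ioc 0 T))
    (hh : ContinuousOn h (Icc 0 T)) :
    ContinuousOn (fun t => ∫ τ in (0 : ℝ)..t, (K (t - τ) : ℂ) * h τ) (Icc 0 T) := by
  rcases lt_or_ge T 0 with hT | hT
  · simp [Icc_eq_empty_of_lt hT]
  set H := IccExtend hT (Icc 0 T |>.domRestrict h)
  have hH : Continuous H := continuous_IccExtend_iff.2 hh.domRestrict
  obtain ⟨B, hB⟩ := isCompact_Icc.exists_bound_of_continuousOn hh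
  have hKc : IntervalIntegrable (fun u => (K u : ℂ)) volume 0 T :=
    (intervalIntegrable_iff_integrableOn_Ioc_of_le hT).2 hK.ofReal
  have hint : ∀ t, IntervalIntegrable (fun u => (K u : ℂ) * H (t - u)) volume 0 T := fun t =>
    hKc.mul_continuousOn (hH.comp (continuous_const.sub continuous_id)).continuousOn
  have hfirst : Continuous fun t => ∫ u in (0 : ℝ)..T, (K u : ℂ) * H (t - u) := by
    refine intervalIntegral.continuous_of_dominated_interval (bound := fun u => ‖(K u : ℂ)‖ * B)
      (fun t => (hint t).aestronglyMeasurable_restrict_uIoc)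
      (fun t => ae_of_all _ fun u _ => ?_) (hKc.norm.mul_const B)
      (ae_of_all _ fun u _ => by fun_prop)
    rw [norm_mul]
    exact mul_le_mul_of_nonneg_left (hB _ (projIcc 0 T hT _).2) (norm_nonneg _)
  have hsecond := intervalIntegral.continuousOn_primitive_interval_left
    (f := fun u => (K u : ℂ)) (μ := volume) (a := 0) (b := T)
    (by rw [uIcc_of_le hT]; exact (intervalIntegrable_iff_integrableOn_Icc_of_le hT).1 hKc)
  rw [uIcc_of_le hT] at hsecond
  refine (hfirst.continuousOn.sub (hsecond.mul (continuousOn_const (c := h 0)))).congr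
    fun t ht => ?_
  have hleft : ∫ τ in (0 : ℝ)..t, (K (t - τ) : ℂ) * h τ =
      ∫ u in (0 : ℝ)..t, (K u : ℂ) * H (t - u) := by
    have e := intervalIntegral.integral_comp_sub_left (a := 0) (b := t)
      (fun u => (K u : ℂ) * H (t - u)) t
    simp only [sub_sub_cancel, sub_self, sub_zero] at e
    rw [← e]
    refine intervalIntegral.integral_congr fun τ hτ => ?_
    rw [uIcc_of_le ht.1] at hτ
    simp [H, IccExtend_of_mem hT _ ⟨hτ.1, hτ.2.trans ht.2⟩]
  have hright : ∫ u in t..T, (K u : ℂ) * H (t - u) = (∫ u in t..T, (K u : ℂ)) * h 0 := by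
    rw [← intervalIntegral.integral_mul_const]
    refine intervalIntegral.integral_congr fun u hu => ?_
    rw [uIcc_of_le ht.2] at hu
    simp [H, IccExtend_of_le_left hT _ (sub_nonpos.2 hu.1)]
  have hsplit := intervalIntegral.integral_interval_sub_left (hint t)
    ((hint t).mono_set (uIcc_subset_uIcc left_mem_uIcc (by rwa [uIcc_of_le hT])))
  rw [Pi.sub_apply, Pi.mul_apply, hleft, ← hright, ← hsplit, sub_sub_cancel]

end Kernel

noncomputable def volterraIntegral (K : ℝ → ℝ) (ζ g : ℝ → ℂ) (t : ℝ) : ℂ :=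
  ∫ τ in (0 : ℝ)..t, (K (t - τ) : ℂ) * ζ τ * g τ

noncomputable def neumannTerm (K : ℝ → ℝ) (ζ f : ℝ → ℂ) (n : ℕ) : ℝ → ℂ :=
  (fun g => -volterraIntegral K ζ g)^[n] f

section Volterra

variable {K : ℝ → ℝ} {ζ f g : ℝ → ℂ} {T t : ℝ}

lemma intervalIntegrable_volterra_integrand (hK : IntegrableOn K (Ioc 0 t)) (ht : 0 ≤ t)
    (hζ : ContinuousOn ζ (Icc 0 t)) (hg : ContinuousOn g (Icc 0 t)) :
    IntervalIntegrable (fun τ => (K (t - τ) : ℂ) * ζ τ * g τ) volume 0 t := by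
  have hKt := hK.intervalIntegrable_comp_sub_left ht
  rw [← uIcc_of_le ht] at hζ hg
  have hKt' : IntervalIntegrable (fun τ => (K (t - τ) : ℂ)) volume 0 t :=
    ⟨hKt.1.ofReal, hKt.2.ofReal⟩
  exact (hKt'.mul_continuousOn hζ).mul_continuousOn hg

lemma volterraIntegral_sub {g₁ g₂ : ℝ → ℂ} (hK : IntegrableOn K (Ioc 0 t)) (ht : 0 ≤ t)
    (hζ : ContinuousOn ζ (Icc 0 t)) (hg₁ : ContinuousOn g₁ (Icc 0 t))
    (hg₂ : ContinuousOn g₂ (Icc 0 t)) :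
    volterraIntegral K ζ (g₁ - g₂) t = volterraIntegral K ζ g₁ t - volterraIntegral K ζ g₂ t := by
  simp only [volterraIntegral, Pi.sub_apply, mul_sub]
  exact intervalIntegral.integral_sub (intervalIntegrable_volterra_integrand hK ht hζ hg₁)
    (intervalIntegrable_volterra_integrand hK ht hζ hg₂)

lemma norm_volterraIntegral_le {M c C : ℝ} (hK : IntegrableOn K (Ioc 0 T))
    (hM : ∀ τ ∈ Icc 0 T, ‖ζ τ‖ ≤ M) (hc : M * ∫ u in Ioc 0 T, |K u| * exp (-(c * u)) ≤ 1 / 2)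
    (hC : 0 ≤ C) (hg : ∀ τ ∈ Icc 0 T, ‖g τ‖ ≤ C * exp (c * τ)) (ht : t ∈ Icc 0 T) :
    ‖volterraIntegral K ζ g t‖ ≤ C / 2 * exp (c * t) := by
  have hM0 : 0 ≤ M := (norm_nonneg _).trans (hM 0 ⟨le_rfl, ht.1.trans ht.2⟩)
  have hKt : IntegrableOn K (Ioc 0 t) := hK.mono_set (Ioc_subset_Ioc_right ht.2)
  have hweight : IntegrableOn (fun u => |K u| * exp (-(c * u))) (Ioc 0 T) :=
    IntegrableOn.mul_continuousOn_of_subset hK.abs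
      (by fun_prop : Continuous fun u => exp (-(c * u))).continuousOn
      measurableSet_Ioc isCompact_Icc Ioc_subset_Icc_self
  calc ‖volterraIntegral K ζ g t‖
      ≤ ∫ τ in (0 : ℝ)..t, M * C * (|K (t - τ)| * exp (c * τ)) := by
        refine intervalIntegral.norm_integral_le_of_norm_le ht.1 (ae_of_all _ fun τ hτ => ?_) ?_
        · have hτT : τ ∈ Icc 0 T := ⟨hτ.1.le, hτ.2.trans ht.2⟩
          rw [norm_mul, norm_mul, Complex.norm_real, norm_eq_abs]
          calc |K (t - τ)| * ‖ζ τ‖ * ‖g τ‖ ≤ |K (t - τ)| * M * (C * exp (c * τ)) := by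
                gcongr
                exacts [hM τ hτT, hg τ hτT]
            _ = _ := by ring
        · exact ((hKt.intervalIntegrable_comp_sub_left ht.1).abs.mul_continuousOn
            (by fun_prop : Continuous fun τ => exp (c * τ)).continuousOn).const_mul _
    _ = M * C * (exp (c * t) * ∫ u in Ioc 0 t, |K u| * exp (-(c * u))) := by
        rw [intervalIntegral.integral_const_mul, integral_comp_sub_mul_exp (fun u => |K u|),
          intervalIntegral.integral_of_le ht.1]
    _ ≤ M * C * (exp (c * t) * ∫ u in Ioc 0 T, |K u| * exp (-(c * u))) := by
        refine mul_le_mul_of_nonneg_left (mul_le_mul_of_nonneg_left ?_ (exp_pos _).le)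
          (mul_nonneg hM0 hC)
        exact setIntegral_mono_set hweight
          (ae_of_all _ fun u => mul_nonneg (abs_nonneg _) (exp_pos _).le)
          (Ioc_subset_Ioc_right ht.2).eventuallyLE
    _ = C * exp (c * t) * (M * ∫ u in Ioc 0 T, |K u| * exp (-(c * u))) := by ring
    _ ≤ C * exp (c * t) * (1 / 2) := mul_le_mul_of_nonneg_left hc (by positivity)
    _ = C / 2 * exp (c * t) := by ring

lemma exists_geometric_bound_of_succ_eq_neg_volterraIntegral {a : ℕ → ℝ → ℂ}
    (hK : IntegrableOn K (Ioc 0 T)) (hζ : ContinuousOn ζ (Icc 0 T))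
    (ha₀ : ContinuousOn (a 0) (Icc 0 T))
    (ha : ∀ n, ∀ τ ∈ Icc 0 T, a (n + 1) τ = -volterraIntegral K ζ (a n) τ) :
    ∃ C, ∀ n, ∀ τ ∈ Icc 0 T, ‖a n τ‖ ≤ C * (1 / 2) ^ n := by
  obtain ⟨M, hM⟩ := isCompact_Icc.exists_bound_of_continuousOn hζ
  obtain ⟨B, hB⟩ := isCompact_Icc.exists_bound_of_continuousOn ha₀
  obtain ⟨c, hc₀, hc⟩ := exists_integral_mul_exp_neg_le hK M
  have hB₀ : 0 ≤ max B 0 := le_max_right _ _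
  have hweighted : ∀ n, ∀ τ ∈ Icc 0 T, ‖a n τ‖ ≤ max B 0 * (1 / 2) ^ n * exp (c * τ) := by
    intro n
    induction n with
    | zero =>
      intro τ hτ
      rw [pow_zero, mul_one]
      exact (hB τ hτ).trans ((le_max_left _ _).trans
        (le_mul_of_one_le_right hB₀ (one_le_exp (mul_nonneg hc₀ hτ.1))))
    | succ n ih =>
      intro τ hτ
      rw [ha n τ hτ, norm_neg, pow_succ, ← mul_assoc, mul_one_div]
      exact norm_volterraIntegral_le hK hM hc (by positivity) ih hτ
  refine ⟨max B 0 * exp (c * T), fun n τ hτ => (hweighted n τ hτ).trans ?_⟩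
  rw [mul_right_comm]
  gcongr
  exact hτ.2

lemma continuousOn_volterraIntegral (hK : ∀ T, IntegrableOn K (Ioc 0 T))
    (hζ : ContinuousOn ζ (Ici 0)) (hg : ContinuousOn g (Ici 0)) :
    ContinuousOn (volterraIntegral K ζ g) (Ici 0) := by
  refine continuousOn_Ici_of_forall_Icc fun T _ => ?_
  unfold volterraIntegral
  simpa only [mul_assoc] using continuousOn_integral_comp_sub_mul_Icc (hK T)
    (h := fun τ => ζ τ * g τ) ((hζ.mul hg).mono Icc_subset_Ici_self)

lemma neumannTerm_zero : neumannTerm K ζ f 0 = f := rfl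

lemma neumannTerm_succ (n : ℕ) :
    neumannTerm K ζ f (n + 1) = -volterraIntegral K ζ (neumannTerm K ζ f n) :=
  Function.iterate_succ_apply' _ _ _

lemma continuousOn_neumannTerm (hK : ∀ T, IntegrableOn K (Ioc 0 T))
    (hζ : ContinuousOn ζ (Ici 0)) (hf : ContinuousOn f (Ici 0)) (n : ℕ) :
    ContinuousOn (neumannTerm K ζ f n) (Ici 0) := by
  induction n with
  | zero => exact hf
  | succ n ih => rw [neumannTerm_succ]; exact (continuousOn_volterraIntegral hK hζ ih).neg

lemma exists_norm_neumannTerm_le (hK : ∀ T, IntegrableOn K (Ioc 0 T))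
    (hζ : ContinuousOn ζ (Ici 0)) (hf : ContinuousOn f (Ici 0)) (T : ℝ) :
    ∃ C, ∀ n, ∀ τ ∈ Icc 0 T, ‖neumannTerm K ζ f n τ‖ ≤ C * (1 / 2) ^ n :=
  exists_geometric_bound_of_succ_eq_neg_volterraIntegral (hK T) (hζ.mono Icc_subset_Ici_self)
    (hf.mono Icc_subset_Ici_self) fun n τ _ => by rw [neumannTerm_succ]; rfl

lemma summable_neumannTerm (hK : ∀ T, IntegrableOn K (Ioc 0 T))
    (hζ : ContinuousOn ζ (Ici 0)) (hf : ContinuousOn f (Ici 0)) (ht : 0 ≤ t) :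
    Summable fun n => neumannTerm K ζ f n t := by
  obtain ⟨C, hC⟩ := exists_norm_neumannTerm_le hK hζ hf t
  exact (summable_geometric_two.mul_left C).of_norm_bounded fun n => hC n t ⟨ht, le_rfl⟩

lemma continuousOn_tsum_neumannTerm (hK : ∀ T, IntegrableOn K (Ioc 0 T))
    (hζ : ContinuousOn ζ (Ici 0)) (hf : ContinuousOn f (Ici 0)) :
    ContinuousOn (fun t => ∑' n, neumannTerm K ζ f n t) (Ici 0) := by
  refine continuousOn_Ici_of_forall_Icc fun T _ => ?_
  obtain ⟨C, hC⟩ := exists_norm_neumannTerm_le hK hζ hf T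
  exact continuousOn_tsum (fun n => (continuousOn_neumannTerm hK hζ hf n).mono Icc_subset_Ici_self)
    (summable_geometric_two.mul_left C) hC

lemma hasSum_volterraIntegral_neumannTerm (hK : ∀ T, IntegrableOn K (Ioc 0 T))
    (hζ : ContinuousOn ζ (Ici 0)) (hf : ContinuousOn f (Ici 0)) (ht : 0 ≤ t) :
    HasSum (fun n => volterraIntegral K ζ (neumannTerm K ζ f n) t)
      (volterraIntegral K ζ (fun τ => ∑' n, neumannTerm K ζ f n τ) t) := by
  obtain ⟨M, hM⟩ := isCompact_Icc.exists_bound_of_continuousOn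
    (hζ.mono (Icc_subset_Ici_self : Icc 0 t ⊆ Ici 0))
  obtain ⟨C, hC⟩ := exists_norm_neumannTerm_le hK hζ hf t
  refine intervalIntegral.hasSum_integral_of_dominated_convergence
    (fun n τ => |K (t - τ)| * M * C * (1 / 2) ^ n) (fun n => ?_) (fun n => ?_)
    (ae_of_all _ fun τ _ => summable_geometric_two.mul_left _) ?_ ?_
  · exact IntervalIntegrable.aestronglyMeasurable_restrict_uIoc <|
      intervalIntegrable_volterra_integrand (hK t) ht (hζ.mono Icc_subset_Ici_self)
        ((continuousOn_neumannTerm hK hζ hf n).mono Icc_subset_Ici_self)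
  · refine ae_of_all _ fun τ hτ => ?_
    rw [uIoc_of_le ht] at hτ
    have hτt : τ ∈ Icc 0 t := ⟨hτ.1.le, hτ.2⟩
    rw [norm_mul, norm_mul, Complex.norm_real, norm_eq_abs, mul_assoc _ C]
    exact mul_le_mul (mul_le_mul_of_nonneg_left (hM τ hτt) (abs_nonneg _)) (hC n τ hτt)
      (norm_nonneg _) (mul_nonneg (abs_nonneg _) ((norm_nonneg _).trans (hM τ hτt)))
  · simp_rw [tsum_mul_left, tsum_geometric_two]
    simpa only [mul_assoc] using
      ((hK t).intervalIntegrable_comp_sub_left ht).abs.mul_const (M * (C * 2))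
  · refine ae_of_all _ fun τ hτ => ?_
    rw [uIoc_of_le ht] at hτ
    exact (summable_neumannTerm hK hζ hf hτ.1.le).hasSum.mul_left _

lemma tsum_neumannTerm_add_volterraIntegral (hK : ∀ T, IntegrableOn K (Ioc 0 T))
    (hζ : ContinuousOn ζ (Ici 0)) (hf : ContinuousOn f (Ici 0)) (ht : 0 ≤ t) :
    ∑' n, neumannTerm K ζ f n t +
      volterraIntegral K ζ (fun τ => ∑' n, neumannTerm K ζ f n τ) t = f t := by
  have htail := (hasSum_nat_add_iff' 1).2 (summable_neumannTerm hK hζ hf ht).hasSum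
  simp only [neumannTerm_succ, Pi.neg_apply, Finset.range_one, Finset.sum_singleton,
    neumannTerm_zero] at htail
  linear_combination ((hasSum_volterraIntegral_neumannTerm hK hζ hf ht).neg.unique htail).symm

lemma eqOn_zero_of_add_volterraIntegral_eq_zero {d : ℝ → ℂ} (hK : ∀ T, IntegrableOn K (Ioc 0 T))
    (hζ : ContinuousOn ζ (Ici 0)) (hd : ContinuousOn d (Ici 0))
    (h : ∀ t, 0 ≤ t → d t + volterraIntegral K ζ d t = 0) : EqOn d 0 (Ici 0) := by
  intro t ht
  obtain ⟨C, hC⟩ := exists_geometric_bound_of_succ_eq_neg_volterraIntegral (a := fun _ => d)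
    (hK t) (hζ.mono Icc_subset_Ici_self) (hd.mono Icc_subset_Ici_self)
    fun _ τ hτ => eq_neg_of_add_eq_zero_left (h τ hτ.1)
  have hlim := (tendsto_pow_atTop_nhds_zero_of_lt_one (by norm_num : (0 : ℝ) ≤ 1 / 2)
    (by norm_num)).const_mul C
  rw [mul_zero] at hlim
  exact norm_le_zero_iff.1 (ge_of_tendsto' hlim fun n => hC n t ⟨ht, le_rfl⟩)

lemma eqOn_of_add_volterraIntegral_eq {q₁ q₂ : ℝ → ℂ} (hK : ∀ T, IntegrableOn K (Ioc 0 T))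
    (hζ : ContinuousOn ζ (Ici 0)) (hq₁ : ContinuousOn q₁ (Ici 0)) (hq₂ : ContinuousOn q₂ (Ici 0))
    (h₁ : ∀ t, 0 ≤ t → q₁ t + volterraIntegral K ζ q₁ t = f t)
    (h₂ : ∀ t, 0 ≤ t → q₂ t + volterraIntegral K ζ q₂ t = f t) : EqOn q₁ q₂ (Ici 0) := by
  have hzero := eqOn_zero_of_add_volterraIntegral_eq_zero hK hζ (hq₁.sub hq₂) fun t ht => by
    rw [volterraIntegral_sub (hK t) ht (hζ.mono Icc_subset_Ici_self) (hq₁.mono Icc_subset_Ici_self)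
      (hq₂.mono Icc_subset_Ici_self), Pi.sub_apply]
    linear_combination h₁ t ht - h₂ t ht
  exact fun t ht => sub_eq_zero.1 (hzero ht)

end Volterra

lemma rpow_mul_exp_neg_le_Gamma_add_one {a s : ℝ} (ha : 0 ≤ a) (hs : 0 ≤ s) :
    a ^ s * exp (-a) ≤ Gamma (s + 1) := by
  have hint := GammaIntegral_convergent (s := s + 1) (by linarith)
  simp only [add_sub_cancel_right] at hint
  rw [Gamma_eq_integral (by linarith), add_sub_cancel_right, ← integral_exp_neg_Ioi,
    ← integral_const_mul]
  calc ∫ x in Ioi a, a ^ s * exp (-x)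
      ≤ ∫ x in Ioi a, exp (-x) * x ^ s := by
        refine setIntegral_mono_on ((integrableOn_exp_neg_Ioi a).const_mul _)
          (hint.mono_set (Ioi_subset_Ioi ha)) measurableSet_Ioi fun x hx => ?_
        rw [mul_comm]
        gcongr
        exact le_of_lt hx
    _ ≤ ∫ x in Ioi 0, exp (-x) * x ^ s :=
        setIntegral_mono_set hint
          (ae_restrict_of_forall_mem measurableSet_Ioi fun x hx =>
            mul_nonneg (exp_pos _).le (rpow_nonneg (le_of_lt hx) _))
          (Ioi_subset_Ioi ha).eventuallyLE

lemma integrableOn_rpow_div_Gamma_add_one {c : ℝ} (hc : 0 < c) :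
    IntegrableOn (fun s => c ^ s / Gamma (s + 1)) (Ioi 0) := by
  have hcont : ContinuousOn (fun s => c ^ s / Gamma (s + 1)) (Ioi 0) :=
    (continuousOn_const.rpow continuousOn_id fun _ _ => Or.inl hc.ne').div
      (differentiableOn_Gamma_Ioi.continuousOn.comp (continuousOn_id.add continuousOn_const)
        fun s (hs : 0 < s) => show 0 < s + 1 by linarith)
      fun s (hs : 0 < s) => (Gamma_pos_of_pos (by linarith)).ne'
  refine ((integrableOn_exp_neg_Ioi 0).const_mul (exp (exp 1 * c))).mono'
    (hcont.aestronglyMeasurable measurableSet_Ioi)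
    (ae_restrict_of_forall_mem measurableSet_Ioi fun s hs => ?_)
  have hs : 0 < s := hs
  -- with `a = e c`, the bound `Γ(s + 1) ≥ a^s e^{-a}` gives `c^s / Γ(s + 1) ≤ e^{e c} e^{-s}`
  have hΓ := rpow_mul_exp_neg_le_Gamma_add_one (a := exp 1 * c) (by positivity) hs.le
  rw [mul_rpow (exp_pos 1).le hc.le, exp_one_rpow] at hΓ
  rw [norm_of_nonneg (by positivity), div_le_iff₀ (by positivity)]
  calc c ^ s = exp (exp 1 * c) * exp (-s) * (exp s * c ^ s * exp (-(exp 1 * c))) := by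
        simp only [exp_neg]
        field_simp
    _ ≤ exp (exp 1 * c) * exp (-s) * Gamma (s + 1) := by gcongr

lemma integral_rpow_sub_one_Ioc {T s : ℝ} (hT : 0 ≤ T) (hs : 0 < s) :
    ∫ u in Ioc 0 T, u ^ (s - 1) = T ^ s / s := by
  rw [← intervalIntegral.integral_of_le hT, integral_rpow (Or.inl (by linarith)),
    sub_add_cancel, zero_rpow hs.ne', sub_zero]

lemma integrableOn_volterraI (T : ℝ) : IntegrableOn volterraI (Ioc 0 T) := by
  rcases le_or_gt T 0 with hT | hT
  · simp [Ioc_eq_empty_of_le hT]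
  have hF : ContinuousOn (fun p : ℝ × ℝ => p.1 ^ (p.2 - 1) / Gamma p.2) (Ioi 0 ×ˢ Ioi 0) :=
    (continuousOn_fst.rpow (continuousOn_snd.sub continuousOn_const)
      fun _ hp => Or.inl hp.1.ne').div
      (differentiableOn_Gamma_Ioi.continuousOn.comp continuousOn_snd fun _ hp => hp.2)
      fun _ hp => (Gamma_pos_of_pos hp.2).ne'
  have hmeas : AEStronglyMeasurable (fun p : ℝ × ℝ => p.1 ^ (p.2 - 1) / Gamma p.2)
      ((volume.restrict (Ioc 0 T)).prod (volume.restrict (Ioi 0))) := by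
    rw [Measure.prod_restrict]
    exact (hF.aestronglyMeasurable (measurableSet_Ioi.prod measurableSet_Ioi)).mono_measure
      (Measure.restrict_mono (prod_mono Ioc_subset_Ioi_self subset_rfl) le_rfl)
  refine ((integrable_prod_iff' hmeas).2 ⟨?_, ?_⟩).integral_prod_left
  · refine ae_restrict_of_forall_mem measurableSet_Ioi fun s (hs : 0 < s) => ?_
    show Integrable (fun u => u ^ (s - 1) / Gamma s) _
    exact (intervalIntegral.intervalIntegrable_rpow' (r := s - 1) (a := 0) (b := T)
      (by linarith)).1.div_const _
  · refine (integrableOn_rpow_div_Gamma_add_one hT).congr_fun (fun s (hs : 0 < s) => ?_)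
      measurableSet_Ioi
    show T ^ s / Gamma (s + 1) = _
    rw [setIntegral_congr_fun measurableSet_Ioc fun u (hu : u ∈ Ioc 0 T) =>
        norm_of_nonneg (div_nonneg (rpow_nonneg hu.1.le _) (Gamma_pos_of_pos hs).le),
      integral_div, integral_rpow_sub_one_Ioc hT.le hs, Gamma_add_one hs.ne', div_div]

theorem volterra_equation_unique_continuous_solution (ζ f : ℝ → ℂ)
    (hζ : ContinuousOn ζ (Set.Ici 0)) (hf : ContinuousOn f (Set.Ici 0)) :
    (∃ q : ℝ → ℂ, ContinuousOn q (Set.Ici 0) ∧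
      ∀ t : ℝ, 0 ≤ t →
        q t + ∫ τ in (0 : ℝ)..t, (volterraI (t - τ) : ℂ) * ζ τ * q τ = f t) ∧
    (∀ q₁ q₂ : ℝ → ℂ, ContinuousOn q₁ (Set.Ici 0) → ContinuousOn q₂ (Set.Ici 0) →
      (∀ t : ℝ, 0 ≤ t →
        q₁ t + ∫ τ in (0 : ℝ)..t, (volterraI (t - τ) : ℂ) * ζ τ * q₁ τ = f t) →
      (∀ t : ℝ, 0 ≤ t →
        q₂ t + ∫ τ in (0 : ℝ)..t, (volterraI (t - τ) : ℂ) * ζ τ * q₂ τ = f t) →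
      ∀ t : ℝ, 0 ≤ t → q₁ t = q₂ t) :=
  ⟨⟨fun t => ∑' n, neumannTerm volterraI ζ f n t,
      continuousOn_tsum_neumannTerm integrableOn_volterraI hζ hf,
      fun _ ht => tsum_neumannTerm_add_volterraIntegral integrableOn_volterraI hζ hf ht⟩,
    fun _ _ hq₁ hq₂ h₁ h₂ _ ht =>
      eqOn_of_add_volterraIntegral_eq integrableOn_volterraI hζ hq₁ hq₂ h₁ h₂ ht⟩
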